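/- arXiv:1107.3688 — 2 statements merged into one kernel-verified Lean document; each statement's English description precedes it below -/
import Mathlib

section
/- Digit stabilization for convergent monotone approximations: if (a_n) is a nondecreasing sequence of reals converging to a limit L, and L is not a decimal rational (i.e., 10^k · L ∉ ℤ for all k ∈ ℕ), then for every decimal rank k there exists N such that for all n ≥ N, the k-th decimal digit of a_n equals the k-th decimal digit of L. -/
/-!
Since `10^k L` is not an integer it lies strictly above `⌊10^k L⌋`, so the scaled approximations
`10^k aₙ`, which increase to `10^k L`, eventually lie in `(⌊10^k L⌋, 10^k L]` and then have the
same floor as `10^k L`.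
-/
/-- The `k`-th decimal digit of a real number: `⌊10^k x⌋ mod 10`. -/
noncomputable def decimalDigit (k : ℕ) (x : ℝ) : ℤ := ⌊(10 : ℝ) ^ k * x⌋ % 10

open Filter Topology

theorem Filter.Tendsto.eventually_floor_eq_of_le {α ι : Type*} [Ring α] [LinearOrder α]
    [IsStrictOrderedRing α] [FloorRing α] [TopologicalSpace α] [OrderTopology α]
    {l : Filter ι} {f : ι → α} {y : α} (hf : Tendsto f l (𝓝 y)) (hle : ∀ᶠ i in l, f i ≤ y)
    (hy : (⌊y⌋ : α) < y) : ∀ᶠ i in l, ⌊f i⌋ = ⌊y⌋ := by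
  filter_upwards [hf.eventually (eventually_gt_nhds hy), hle] with i hgt hle
  exact Int.floor_eq_iff.mpr ⟨hgt.le, hle.trans_lt (Int.lt_floor_add_one y)⟩

theorem digit_stabilization (a : ℕ → ℝ) (L : ℝ)
    (hmono : Monotone a) (hlim : Filter.Tendsto a Filter.atTop (nhds L))
    (hirr : ∀ k : ℕ, ¬ ∃ m : ℤ, (10 : ℝ) ^ k * L = (m : ℝ)) :
    ∀ k : ℕ, ∃ N : ℕ, ∀ n ≥ N, decimalDigit k (a n) = decimalDigit k L := by
  intro k
  have hfloor : (⌊(10 : ℝ) ^ k * L⌋ : ℝ) < 10 ^ k * L :=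
    (Int.floor_le _).lt_of_ne fun h => hirr k ⟨_, h.symm⟩
  have hle : ∀ᶠ n in atTop, (10 : ℝ) ^ k * a n ≤ 10 ^ k * L :=
    Eventually.of_forall fun n => by gcongr; exact hmono.ge_of_tendsto hlim n
  obtain ⟨N, hN⟩ := eventually_atTop.mp ((hlim.const_mul _).eventually_floor_eq_of_le hle hfloor)
  exact ⟨N, fun n hn => congrArg (· % 10) (hN n hn)⟩
end

section
/- The function 1/log(1/i) (equivalently −1/log i, for 0 < i < 1) is an infinitesimal of order 0 in Cauchy's sense: it tends to 0 as i → 0⁺, yet for every real r > 0, (1/log(1/i))/i^r → ∞ as i → 0⁺. -/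
/-! Since `log (1/i) → ∞`, its reciprocal tends to `0`; and `(1 / log (1/i)) / i ^ r` is the
reciprocal of `log (1/i) * i ^ r`, which tends to `0⁺` because any positive power of `i`
beats the logarithm. -/

open Filter Real Topology

lemma tendsto_log_one_div_nhdsGT_zero :
    Tendsto (fun x : ℝ => log (1 / x)) (𝓝[>] 0) atTop := by
  simpa only [one_div, log_inv, Function.comp_def] using
    tendsto_neg_atBot_atTop.comp tendsto_log_nhdsGT_zero

lemma log_one_div_mul_rpow_pos {x : ℝ} (hx₀ : 0 < x) (hx₁ : x < 1) (r : ℝ) :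
    0 < log (1 / x) * x ^ r :=
  mul_pos (log_pos ((one_lt_div hx₀).2 hx₁)) (rpow_pos_of_pos hx₀ r)

lemma tendsto_log_one_div_mul_rpow_nhdsGT_zero {r : ℝ} (hr : 0 < r) :
    Tendsto (fun x : ℝ => log (1 / x) * x ^ r) (𝓝[>] 0) (𝓝[>] 0) := by
  have h_zero : Tendsto (fun x : ℝ => log (1 / x) * x ^ r) (𝓝[>] 0) (𝓝 0) := by
    simpa only [one_div, log_inv, neg_mul, neg_zero] using
      (tendsto_log_mul_rpow_nhdsGT_zero hr).neg
  refine tendsto_nhdsWithin_iff.2 ⟨h_zero, ?_⟩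
  filter_upwards [self_mem_nhdsWithin,
    eventually_nhdsWithin_of_eventually_nhds (eventually_lt_nhds zero_lt_one)]
    with x hx₀ hx₁
  exact log_one_div_mul_rpow_pos hx₀ hx₁ r

theorem inv_log_order_zero :
    Filter.Tendsto (fun i : ℝ => 1 / Real.log (1 / i))
      (nhdsWithin 0 (Set.Ioi 0)) (nhds 0) ∧
    ∀ r : ℝ, 0 < r →
      Filter.Tendsto (fun i : ℝ => (1 / Real.log (1 / i)) / i ^ r)
        (nhdsWithin 0 (Set.Ioi 0)) Filter.atTop := by
  constructor
  · simpa only [one_div, Pi.inv_def] using tendsto_log_one_div_nhdsGT_zero.inv_tendsto_atTop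
  · intro r hr
    exact (tendsto_inv_nhdsGT_zero.comp (tendsto_log_one_div_mul_rpow_nhdsGT_zero hr)).congr
      fun i => ((div_div 1 _ _).trans (one_div _)).symm
end
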